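/- arXiv:1305.0080 — 4 statements merged into one kernel-verified Lean document; each statement's English description precedes it below -/
import Mathlib

section
/- Let G = A ⋊ C with A, C abelian and C = ⟨d⟩ cyclic generated by a single element d. Then the commutator subgroup G' equals the set {[u,d] : u ∈ A}; in particular every element of G' is a commutator. -/
theorem commutator_eq_set_of_semidirect_cyclic {G : Type*} [Group G] (A : Subgroup G)
    [A.Normal] (hA : IsMulCommutative A) (d : G)
    (hAC : ∀ g : G, ∃ a ∈ A, ∃ c ∈ Subgroup.zpowers d, g = a * c)
    (hint : A ⊓ Subgroup.zpowers d = ⊥) :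
    (commutator G : Set G) = {g : G | ∃ u ∈ A, g = u⁻¹ * d⁻¹ * u * d} := by
  haveI := hA
  have hN : ∀ u ∈ A, ∀ g : G, g * u * g⁻¹ ∈ A := fun u hu g => ‹A.Normal›.conj_mem u hu g
  have comm : ∀ a b : G, a ∈ A → b ∈ A → a * b = b * a := fun a b ha hb =>
    Subgroup.mul_comm_of_mem_isMulCommutative A ha hb
  -- membership of [u,d] in A
  have memA : ∀ u ∈ A, u⁻¹ * d⁻¹ * u * d ∈ A := by
    intro u hu
    have h1 : d⁻¹ * u * d ∈ A := by
      have := hN u hu d⁻¹; simpa [mul_assoc] using this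
    have := A.mul_mem (A.inv_mem hu) h1
    simpa [mul_assoc] using this
  -- B as a subgroup
  set S : Set G := {g : G | ∃ u ∈ A, g = u⁻¹ * d⁻¹ * u * d} with hS
  have one_mem : (1 : G) ∈ S := ⟨1, A.one_mem, by group⟩
  have mul_mem : ∀ {x y : G}, x ∈ S → y ∈ S → x * y ∈ S := by
    rintro x y ⟨u, hu, rfl⟩ ⟨v, hv, rfl⟩
    refine ⟨u * v, A.mul_mem hu hv, ?_⟩
    have h1 : d⁻¹ * u * d ∈ A := by simpa [mul_assoc] using hN u hu d⁻¹
    -- (uv)⁻¹ d⁻¹ (uv) d = v⁻¹ (u⁻¹ d⁻¹ u d) d⁻¹ v d ; use commutation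
    have key : (u⁻¹ * d⁻¹ * u * d) * v⁻¹ = v⁻¹ * (u⁻¹ * d⁻¹ * u * d) :=
      (comm _ _ (memA u hu) (A.inv_mem hv)).symm ▸ rfl
    calc (u⁻¹ * d⁻¹ * u * d) * (v⁻¹ * d⁻¹ * v * d)
        = ((u⁻¹ * d⁻¹ * u * d) * v⁻¹) * (d⁻¹ * v * d) := by group
      _ = (v⁻¹ * (u⁻¹ * d⁻¹ * u * d)) * (d⁻¹ * v * d) := by
            rw [comm _ _ (memA u hu) (A.inv_mem hv)]
      _ = (u * v)⁻¹ * d⁻¹ * (u * v) * d := by group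
  have inv_mem : ∀ {x : G}, x ∈ S → x⁻¹ ∈ S := by
    rintro x ⟨u, hu, rfl⟩
    refine ⟨u⁻¹, A.inv_mem hu, ?_⟩
    -- (u⁻¹ d⁻¹ u d)⁻¹ = d⁻¹ u⁻¹ d u ; target u d⁻¹ u⁻¹ d
    have h1 : d⁻¹ * u⁻¹ * d ∈ A := by simpa [mul_assoc] using hN u⁻¹ (A.inv_mem hu) d⁻¹
    have key : u * (d⁻¹ * u⁻¹ * d) = (d⁻¹ * u⁻¹ * d) * u := comm _ _ hu h1
    calc (u⁻¹ * d⁻¹ * u * d)⁻¹ = (d⁻¹ * u⁻¹ * d) * u := by group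
      _ = u * (d⁻¹ * u⁻¹ * d) := key.symm
      _ = u⁻¹⁻¹ * d⁻¹ * u⁻¹ * d := by group
  let B : Subgroup G :=
    { carrier := S
      one_mem' := one_mem
      mul_mem' := mul_mem
      inv_mem' := inv_mem }
  have memB : ∀ x, x ∈ B ↔ x ∈ S := fun x => Iff.rfl
  have hBA : ∀ x ∈ B, x ∈ A := by rintro x ⟨u, hu, rfl⟩; exact memA u hu
  -- conjugation by d preserves B
  have conjd : ∀ x ∈ B, d * x * d⁻¹ ∈ B := by
    rintro x ⟨u, hu, rfl⟩
    have hv : d * u * d⁻¹ ∈ A := hN u hu d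
    exact ⟨d * u * d⁻¹, hv, by group⟩
  have conjdinv : ∀ x ∈ B, d⁻¹ * x * d ∈ B := by
    rintro x ⟨u, hu, rfl⟩
    have hv : d⁻¹ * u * d ∈ A := by simpa [mul_assoc] using hN u hu d⁻¹
    exact ⟨d⁻¹ * u * d, hv, by group⟩
  have conja : ∀ a ∈ A, ∀ x ∈ B, a * x * a⁻¹ ∈ B := by
    intro a ha x hx
    have : a * x * a⁻¹ = x := by
      rw [comm a x ha (hBA x hx)]; group
    rwa [this]
  -- B is normal
  have hnorm : B.Normal := by
    rw [← Subgroup.normalizer_eq_top_iff, eq_top_iff]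
    intro g _
    obtain ⟨a, ha, c, hc, rfl⟩ := hAC g
    have hdmem : d ∈ Subgroup.normalizer (B : Set G) := by
      intro n
      constructor
      · intro hn; exact conjd n hn
      · intro hn
        have := conjdinv _ hn
        simpa [mul_assoc] using this
    have hamem : ∀ b ∈ A, b ∈ Subgroup.normalizer (B : Set G) := by
      intro b hb n
      constructor
      · intro hn; exact conja b hb n hn
      · intro hn
        have := conja b⁻¹ (A.inv_mem hb) _ hn
        simpa [mul_assoc] using this
    have hcmem : c ∈ Subgroup.normalizer (B : Set G) := by
      obtain ⟨k, rfl⟩ := hc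
      exact Subgroup.zpow_mem _ (hdmem) k
    exact Subgroup.mul_mem _ (hamem a ha) hcmem
  haveI := hnorm
  -- commutator G ≤ B via quotient being abelian
  have hle : commutator G ≤ B := by
    rw [commutator, Subgroup.commutator_le]
    intro g _ h _
    rw [← QuotientGroup.eq_one_iff (N := B), ← QuotientGroup.mk'_apply,
      map_commutatorElement, commutatorElement_eq_one_iff_commute]
    -- show images commute
    obtain ⟨a, ha, c, hc, rfl⟩ := hAC g
    obtain ⟨b, hb, e, he, rfl⟩ := hAC h
    obtain ⟨m, rfl⟩ := hc
    obtain ⟨n, rfl⟩ := he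
    set π := QuotientGroup.mk' B
    have hAd : ∀ x ∈ A, Commute (π x) (π d) := by
      intro x hx
      rw [Commute, SemiconjBy, ← map_mul, ← map_mul]
      apply (QuotientGroup.eq_iff_div_mem (N := B)).mpr
      have hu : d * x⁻¹ * d⁻¹ ∈ A := hN x⁻¹ (A.inv_mem hx) d
      have h1 : (d * x) * (x * d)⁻¹ ∈ B := ⟨d * x⁻¹ * d⁻¹, hu, by group⟩
      have h2 := B.inv_mem h1
      simpa [div_eq_mul_inv, mul_assoc, mul_inv_rev] using h2
    have hAB : ∀ x ∈ A, ∀ y ∈ A, Commute (π x) (π y) := by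
      intro x hx y hy
      rw [Commute, SemiconjBy, ← map_mul, ← map_mul, comm x y hx hy]
    have c1 : Commute (π a) (π b) := hAB a ha b hb
    have c2 : Commute (π a) (π d) := hAd a ha
    have c3 : Commute (π b) (π d) := hAd b hb
    have : Commute (π a * (π d) ^ m) (π b * (π d) ^ n) := by
      refine Commute.mul_left ?_ ?_
      · exact Commute.mul_right c1 (c2.zpow_right n)
      · exact Commute.mul_right (c3.zpow_right m).symm ((Commute.refl (π d)).zpow_zpow m n)
    simpa [map_mul, map_zpow] using this
  -- B ≤ commutator G
  have hge : ∀ x ∈ S, x ∈ commutator G := by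
    rintro x ⟨u, hu, rfl⟩
    open scoped commutatorElement in
    have : ⁅u⁻¹, d⁻¹⁆ ∈ commutator G := by
      rw [commutator]
      exact Subgroup.commutator_mem_commutator (Subgroup.mem_top _) (Subgroup.mem_top _)
    simpa [commutatorElement_def, mul_assoc] using this
  ext x
  constructor
  · intro hx; exact hle hx
  · intro hx; exact hge x hx
end

section
/- Every invertible element x of the ring ℤ[√3] has the form x = ±(2+√3)ⁿ for some integer n. -/
/-- Auxiliary: `2+√3` as a Pell solution. -/
def fundSol : Pell.Solution₁ 3 := Pell.Solution₁.mk 2 1 (by norm_num)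

/-- The fundamental unit `2 + √3` of `ℤ[√3]`. -/
def fundUnit : (ℤ√3)ˣ :=
  ⟨⟨2, 1⟩, ⟨2, -1⟩, by decide, by decide⟩

theorem units_of_Zsqrt3 (x : ℤ√3) (hx : IsUnit x) :
    ∃ n : ℤ, x = ↑(fundUnit ^ n) ∨ x = -↑(fundUnit ^ n) := by
  -- the norm of a unit is ±1
  have hnorm : x.norm = 1 ∨ x.norm = -1 := by
    have h := Zsqrtd.norm_eq_one_iff.mpr hx
    omega
  -- norm = -1 is impossible mod 3
  have hn1 : x.norm = 1 := by
    rcases hnorm with h | h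
    · exact h
    · exfalso
      have h' : x.re * x.re - 3 * (x.im * x.im) = -1 := by
        rw [← h, Zsqrtd.norm_def]; ring
      have hz : ((x.re : ZMod 3)) * (x.re : ZMod 3) = -1 := by
        have := congrArg (fun t : ℤ => (t : ZMod 3)) h'
        push_cast at this
        have h3 : (3 : ZMod 3) = 0 := rfl
        linear_combination this + ((x.im : ZMod 3) * (x.im : ZMod 3)) * h3
      have : ∀ a : ZMod 3, a * a ≠ -1 := by decide
      exact this _ hz
  have hprop : x.re ^ 2 - 3 * x.im ^ 2 = 1 := by
    rw [← hn1, Zsqrtd.norm_def]; ring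
  set sol : Pell.Solution₁ 3 := Pell.Solution₁.mk x.re x.im hprop with hsol
  have hsolx : (sol : ℤ√3) = x := Zsqrtd.ext rfl rfl
  have hfund : Pell.IsFundamental fundSol := by
    refine ⟨?_, ?_, fun {b} hb => ?_⟩
    · norm_num [fundSol]
    · norm_num [fundSol]
    have hby := b.prop
    simp only [fundSol, Pell.Solution₁.x_mk]
    nlinarith [sq_nonneg b.y, sq_nonneg (b.x - 2), sq_nonneg (b.x + 2)]
  obtain ⟨n, hn⟩ := hfund.eq_zpow_or_neg_zpow sol
  -- relate powers of f to powers of fundUnit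
  have hfu : Unitary.toUnits fundSol = fundUnit := Units.ext rfl
  have key : ∀ m : ℤ, ((fundSol ^ m : Pell.Solution₁ 3) : ℤ√3) = ↑(fundUnit ^ m) := by
    intro m
    have h2 : Unitary.toUnits (fundSol ^ m) = (Unitary.toUnits fundSol) ^ m := map_zpow _ _ _
    rw [hfu] at h2
    calc ((fundSol ^ m : Pell.Solution₁ 3) : ℤ√3) = ↑(Unitary.toUnits (fundSol ^ m)) := rfl
      _ = ↑(fundUnit ^ m) := by rw [h2]
  refine ⟨n, ?_⟩
  rcases hn with h | h
  · left; rw [← hsolx, h, key]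
  · right; rw [← hsolx, h]
    show -((fundSol ^ n : Pell.Solution₁ 3) : ℤ√3) = _
    rw [key]
end

section
/- Let G be a finite group of exponent dividing 2ⁿ in which for every element x, the equation 2y = x has either no solution or exactly two solutions y, and suppose G contains an element of order 2ⁿ. Then G is cyclic of order 2ⁿ. -/
open Finset in
theorem cyclic_of_two_power (n : ℕ) (G : Type*) [AddCommGroup G] [Fintype G]
    (hexp : ∀ x : G, (2 ^ n) • x = 0)
    (hsol : ∀ x : G, {y : G | y + y = x}.ncard = 0 ∨ {y : G | y + y = x}.ncard = 2)
    (hord : ∃ g : G, addOrderOf g = 2 ^ n) :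
    Nonempty (G ≃+ ZMod (2 ^ n)) := by
  classical
  -- any fiber of the doubling map has size at most 2
  have hfib : ∀ x : G, {y : G | y + y = x}.ncard ≤ 2 := by
    intro x; rcases hsol x with h | h <;> omega
  -- count solutions of 2^v • a = 0
  have hpow : ∀ v : ℕ, #{a : G | 2 ^ v • a = 0} ≤ 2 ^ v := by
    intro v
    induction v with
    | zero =>
      have : ({a : G | 2 ^ 0 • a = 0} : Finset G) ⊆ {(0 : G)} := by
        intro a ha
        simp only [mem_filter, pow_zero, one_nsmul] at ha
        simp [ha.2]
      simpa using (Finset.card_le_card this).trans (by simp)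
    | succ v ih =>
      have hmaps : ∀ a ∈ ({a : G | 2 ^ (v + 1) • a = 0} : Finset G),
          a + a ∈ ({a : G | 2 ^ v • a = 0} : Finset G) := by
        intro a ha
        simp only [mem_filter, mem_univ, true_and] at ha ⊢
        rw [← two_nsmul, ← mul_nsmul', ← pow_succ]
        exact ha
      have hbound : ∀ b ∈ ({a : G | 2 ^ v • a = 0} : Finset G),
          #{a ∈ ({a : G | 2 ^ (v + 1) • a = 0} : Finset G) | a + a = b} ≤ 2 := by
        intro b _
        have hsub : ({a ∈ ({a : G | 2 ^ (v + 1) • a = 0} : Finset G) | a + a = b} : Finset G)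
            ⊆ {y : G | y + y = b}.toFinset := by
          intro a ha
          simp only [mem_filter] at ha
          simp [Set.mem_toFinset, ha.2]
        have h1 := Finset.card_le_card hsub
        have h2 : {y : G | y + y = b}.toFinset.card = {y : G | y + y = b}.ncard := by
          rw [Set.ncard_eq_toFinset_card']
        exact h1.trans (h2 ▸ hfib b)
      calc #{a : G | 2 ^ (v + 1) • a = 0}
          ≤ 2 * #{a : G | 2 ^ v • a = 0} :=
            Finset.card_le_mul_card_image_of_maps_to hmaps 2 hbound
        _ ≤ 2 * 2 ^ v := by omega
        _ = 2 ^ (v + 1) := by ring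
  -- hence for any m > 0
  have hcount : ∀ m : ℕ, 0 < m → #{a : G | m • a = 0} ≤ m := by
    intro m hm
    obtain ⟨v, hv, hgcd⟩ : ∃ v ≤ n, Nat.gcd m (2 ^ n) = 2 ^ v :=
      (Nat.dvd_prime_pow Nat.prime_two).mp (Nat.gcd_dvd_right m (2 ^ n))
    have hdvd : 2 ^ v ∣ m := hgcd ▸ Nat.gcd_dvd_left m (2 ^ n)
    have hsub : ({a : G | m • a = 0} : Finset G) ⊆ ({a : G | 2 ^ v • a = 0} : Finset G) := by
      intro a ha
      simp only [mem_filter, mem_univ, true_and] at ha ⊢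
      have h1 : addOrderOf a ∣ m := addOrderOf_dvd_of_nsmul_eq_zero ha
      have h2 : addOrderOf a ∣ 2 ^ n := addOrderOf_dvd_of_nsmul_eq_zero (hexp a)
      have : addOrderOf a ∣ 2 ^ v := hgcd ▸ Nat.dvd_gcd h1 h2
      exact addOrderOf_dvd_iff_nsmul_eq_zero.mp this
    exact (Finset.card_le_card hsub).trans ((hpow v).trans (Nat.le_of_dvd hm hdvd))
  have hcyc : IsAddCyclic G := isAddCyclic_of_card_nsmul_eq_zero_le hcount
  -- card G = 2 ^ n
  obtain ⟨g, hg⟩ := hord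
  have h1 : 2 ^ n ∣ Fintype.card G := hg ▸ addOrderOf_dvd_card
  have h2 : Fintype.card G ∣ 2 ^ n := by
    obtain ⟨x, hx⟩ := hcyc.exists_generator
    have hxo : addOrderOf x = Fintype.card G := by
      have := addOrderOf_eq_card_of_forall_mem_zmultiples hx
      simpa using this
    exact hxo ▸ addOrderOf_dvd_of_nsmul_eq_zero (hexp x)
  have hcard : Fintype.card G = 2 ^ n := Nat.dvd_antisymm h2 h1
  have hnat : Nat.card G = 2 ^ n := by rw [Nat.card_eq_fintype_card, hcard]
  exact ⟨(hnat ▸ zmodAddCyclicAddEquiv hcyc).symm⟩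
end

section
/- In a finitely generated class-2 nilpotent group G whose center Z equals the set of commutators, is infinite cyclic, and with G/Z free abelian of rank 2, the group G is generated by two elements c, d whose commutator [c,d] generates Z. -/
section Aux

variable {G : Type*} [Group G]

private def kk (x y : G) : G := x⁻¹ * y⁻¹ * x * y

private lemma kk_self (x : G) : kk x x = 1 := by simp [kk]

private lemma kk_antisymm (x y : G) : kk x y = (kk y x)⁻¹ := by simp [kk]; group

variable (hsub : ∀ x y : G, x⁻¹ * y⁻¹ * x * y ∈ Subgroup.center G)
include hsub

private lemma kk_mem (x y : G) : kk x y ∈ Subgroup.center G := hsub x y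

private lemma kk_mul_right (x y z : G) : kk x (y * z) = kk x y * kk x z := by
  have h1 := Subgroup.mem_center_iff.mp (hsub x y)
  calc x⁻¹ * (y * z)⁻¹ * x * (y * z)
      = x⁻¹ * z⁻¹ * (x * (x⁻¹ * y⁻¹ * x * y)) * z := by group
    _ = (x⁻¹ * z⁻¹ * x) * ((x⁻¹ * y⁻¹ * x * y) * z) := by group
    _ = (x⁻¹ * z⁻¹ * x) * (z * (x⁻¹ * y⁻¹ * x * y)) := by rw [← h1 z]
    _ = (x⁻¹ * z⁻¹ * x * z) * (x⁻¹ * y⁻¹ * x * y) := by group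
    _ = (x⁻¹ * y⁻¹ * x * y) * (x⁻¹ * z⁻¹ * x * z) := h1 _

private lemma kk_mul_left (x y z : G) : kk (x * y) z = kk x z * kk y z := by
  have h1 := Subgroup.mem_center_iff.mp (hsub x z)
  rw [kk_antisymm, kk_mul_right hsub, mul_inv_rev, ← kk_antisymm, ← kk_antisymm]
  exact h1 _

private def kkHom (x : G) : G →* Subgroup.center G where
  toFun y := ⟨kk x y, hsub x y⟩
  map_one' := by ext; simp [kk]
  map_mul' y z := by ext; exact kk_mul_right hsub x y z

private lemma kk_zpow_right (x y : G) (n : ℤ) : kk x (y ^ n) = (kk x y) ^ n := by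
  have := map_zpow (kkHom hsub x) y n
  have h2 := congrArg (Subtype.val) this
  simpa [kkHom] using h2

private lemma kk_zpow_left (x y : G) (n : ℤ) : kk (x ^ n) y = (kk x y) ^ n := by
  rw [kk_antisymm, kk_zpow_right hsub, kk_antisymm x y, inv_zpow]

omit hsub in
private lemma kk_central_right (x z : G) (hz : z ∈ Subgroup.center G) : kk x z = 1 := by
  have h1 := Subgroup.mem_center_iff.mp (inv_mem hz)
  unfold kk
  rw [h1 x⁻¹]
  group

omit hsub in
private lemma kk_central_left (z x : G) (hz : z ∈ Subgroup.center G) : kk z x = 1 := by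
  rw [kk_antisymm, kk_central_right x z hz, inv_one]

private lemma kk_formula (c d : G) (m n m' n' : ℤ) (z z' : G)
    (hz : z ∈ Subgroup.center G) (hz' : z' ∈ Subgroup.center G) :
    kk (c ^ m * d ^ n * z) (c ^ m' * d ^ n' * z') = (kk c d) ^ (m * n' - n * m') := by
  rw [kk_mul_left hsub, kk_mul_left hsub, kk_central_left z _ hz, mul_one,
    kk_zpow_left hsub, kk_zpow_left hsub,
    kk_mul_right hsub, kk_mul_right hsub, kk_central_right _ _ hz', mul_one,
    kk_mul_right hsub, kk_mul_right hsub, kk_central_right _ _ hz', mul_one,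
    kk_zpow_right hsub, kk_zpow_right hsub, kk_zpow_right hsub, kk_zpow_right hsub,
    kk_self, one_zpow, one_mul, kk_self, one_zpow, mul_one, kk_antisymm d c]
  simp only [inv_zpow, ← zpow_neg, ← zpow_mul, ← zpow_add]
  congr 1; ring

end Aux

theorem two_generated_of_heisenberg_like {G : Type*} [Group G] (hfg : Group.FG G)
    (hcomm : {g : G | ∃ x y : G, g = x⁻¹ * y⁻¹ * x * y} = (Subgroup.center G : Set G))
    (hZ : Nonempty ((Subgroup.center G) ≃* Multiplicative ℤ))
    (hB : Nonempty ((G ⧸ Subgroup.center G) ≃* Multiplicative (ℤ × ℤ))) :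
    ∃ c d : G, Subgroup.closure ({c, d} : Set G) = ⊤ ∧
      Subgroup.zpowers (c⁻¹ * d⁻¹ * c * d) = Subgroup.center G := by
  classical
  obtain ⟨φ⟩ := hB
  obtain ⟨ψ⟩ := hZ
  have hsub : ∀ x y : G, x⁻¹ * y⁻¹ * x * y ∈ Subgroup.center G := by
    intro x y
    have : (x⁻¹ * y⁻¹ * x * y) ∈ {g : G | ∃ x y : G, g = x⁻¹ * y⁻¹ * x * y} := ⟨x, y, rfl⟩
    rwa [hcomm] at this
  set Z := Subgroup.center G with hZdef
  set π : G →* G ⧸ Z := QuotientGroup.mk' Z with hπ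
  obtain ⟨c, hc⟩ := QuotientGroup.mk'_surjective Z (φ.symm (Multiplicative.ofAdd ((1 : ℤ), (0 : ℤ))))
  obtain ⟨d, hd⟩ := QuotientGroup.mk'_surjective Z (φ.symm (Multiplicative.ofAdd ((0 : ℤ), (1 : ℤ))))
  -- decomposition
  have decomp : ∀ a : G, ∃ m n : ℤ, ∃ z : G, z ∈ Z ∧ a = c ^ m * d ^ n * z := by
    intro a
    set m := (Multiplicative.toAdd (φ (π a))).1 with hm
    set n := (Multiplicative.toAdd (φ (π a))).2 with hn
    refine ⟨m, n, (c ^ m * d ^ n)⁻¹ * a, ?_, by group⟩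
    have hq : π (c ^ m * d ^ n) = π a := by
      apply φ.injective
      rw [map_mul, map_zpow, map_zpow, hπ, hc, hd, map_mul, map_zpow, map_zpow,
        MulEquiv.apply_symm_apply, MulEquiv.apply_symm_apply]
      rw [← ofAdd_zsmul, ← ofAdd_zsmul, ← ofAdd_add]
      apply Multiplicative.toAdd.injective
      simp only [toAdd_ofAdd, Prod.ext_iff, hm, hn]
      constructor <;> simp [hπ]
    have : π ((c ^ m * d ^ n)⁻¹ * a) = 1 := by
      rw [map_mul, map_inv, hq, inv_mul_cancel]
    rwa [← MonoidHom.mem_ker, QuotientGroup.ker_mk'] at this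
  -- every central element is a power of kk c d
  set t : G := c⁻¹ * d⁻¹ * c * d with ht
  have habt : ∀ a b : G, ∃ s : ℤ, a⁻¹ * b⁻¹ * a * b = t ^ s := by
    intro a b
    obtain ⟨m, n, z, hz, rfl⟩ := decomp a
    obtain ⟨m', n', z', hz', rfl⟩ := decomp b
    exact ⟨m * n' - n * m', kk_formula hsub c d m n m' n' z z' hz hz'⟩
  set T : Z := ⟨t, hsub c d⟩ with hT
  have hZgen : Subgroup.zpowers T = ⊤ := by
    set ζ : Z := ψ.symm (Multiplicative.ofAdd (1 : ℤ)) with hζ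
    have hζgen : Subgroup.zpowers ζ = ⊤ := by
      rw [eq_top_iff]
      intro w _
      refine ⟨Multiplicative.toAdd (ψ w), ?_⟩
      apply ψ.injective
      rw [map_zpow, hζ, MulEquiv.apply_symm_apply, ← ofAdd_zsmul]
      simp
    have hζmem : (ζ : G) ∈ (Z : Set G) := ζ.2
    rw [← hcomm] at hζmem
    obtain ⟨a, b, hab⟩ := hζmem
    obtain ⟨s, hs⟩ := habt a b
    have hζT : ζ = T ^ s := by
      apply Subtype.ext
      rw [hab, hs]
      rfl
    rw [eq_top_iff, ← hζgen]
    exact Subgroup.zpowers_le.mpr (hζT ▸ zpow_mem (Subgroup.mem_zpowers T) s)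
  have hZeq : Subgroup.zpowers t = Z := by
    have := congrArg (Subgroup.map Z.subtype) hZgen
    rw [MonoidHom.map_zpowers, ← MonoidHom.range_eq_map, Subgroup.range_subtype] at this
    simpa using this
  refine ⟨c, d, ?_, hZeq⟩
  rw [eq_top_iff]
  intro g _
  have hcH : c ∈ Subgroup.closure ({c, d} : Set G) :=
    Subgroup.subset_closure (Set.mem_insert _ _)
  have hdH : d ∈ Subgroup.closure ({c, d} : Set G) :=
    Subgroup.subset_closure (Set.mem_insert_of_mem _ rfl)
  have htH : t ∈ Subgroup.closure ({c, d} : Set G) :=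
    mul_mem (mul_mem (mul_mem (inv_mem hcH) (inv_mem hdH)) hcH) hdH
  obtain ⟨m, n, z, hz, rfl⟩ := decomp g
  have hzH : z ∈ Subgroup.closure ({c, d} : Set G) := by
    rw [← hZeq] at hz
    obtain ⟨r, rfl⟩ := hz
    exact zpow_mem htH r
  exact mul_mem (mul_mem (zpow_mem hcH m) (zpow_mem hdH n)) hzH
end
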